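/- Let n be a positive integer and let u, v ∈ ℝⁿ. Define the n×n matrices A and C by A(i,j) = 1 + u_i v_j and C(i,j) = (1 + u_i v_j)^n. Then n! · det(C) = Δ(u) · Δ(v) · (∏_{j=0}^{n} C(n, j)) · perm(A), where C(n, j) denotes the binomial coefficient (n choose j). -/

import Mathlib

open Matrix

/-- The Vandermonde polynomial `∏_{i < j} (x_j - x_i)` of a vector. -/
noncomputable def vmd {n : ℕ} (x : Fin n → ℝ) : ℝ :=
  ∏ i : Fin n, ∏ j ∈ Finset.Ioi i, (x j - x i)

/-!
By the binomial theorem `C = X * Y` with `X i k = (n choose k) * u i ^ k` and `Y k j = v j ^ k`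
(`k = 0, …, n`). Cauchy–Binet then writes `det C` as a sum over the omitted index `m`, and each
minor is a generalized Vandermonde determinant `Δ(x) * e_{n-m}(x)`: it is, up to sign, the
coefficient of `X ^ m` in the Vandermonde determinant of `(X, x_1, …, x_n)`, which equals
`Δ(x) * ∏ (x_i - X)`.
Expanding `∏ (1 + u_i v_{σ i})` gives `perm A = ∑ t! (n-t)! e_t(u) e_t(v)`, since each
`t`-subset is the image of a fixed one under exactly `t! (n-t)!` permutations. As
`n! * ∏_{k ≠ m} (n choose k) = m! (n-m)! * ∏_k (n choose k)`, the two sums agree term by term.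
-/

open Finset Equiv Function
open scoped Nat

section Permutations

variable {α : Type*} [Fintype α] [DecidableEq α]

theorem Finset.exists_perm_map_eq {S T : Finset α} (h : #S = #T) :
    ∃ π : Perm α, S.map π.toEmbedding = T := by
  let e := S.equivOfCardEq h
  refine ⟨e.extendSubtype, eq_of_subset_of_card_le (fun y hy => ?_) (by simp [h])⟩
  obtain ⟨x, hx, rfl⟩ := mem_map.1 hy
  exact e.extendSubtype_mem x hx

theorem card_perm_map_eq_congr (T : Finset α) {S S' : Finset α} (h : #S = #S') :
    #{σ : Perm α | T.map σ.toEmbedding = S} = #{σ : Perm α | T.map σ.toEmbedding = S'} := by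
  obtain ⟨π, rfl⟩ := exists_perm_map_eq h
  refine card_equiv (Equiv.mulLeft π) fun σ => ?_
  simp only [mem_filter_univ, coe_mulLeft, Perm.mul_def, Equiv.trans_toEmbedding,
    ← Finset.map_map, map_inj]

theorem card_perm_map_eq (T : Finset α) {S : Finset α} (h : #T = #S) :
    #{σ : Perm α | T.map σ.toEmbedding = S} = (#T)! * (Fintype.card α - #T)! := by
  have hT : #T ≤ Fintype.card α := card_le_univ T
  have total : (Fintype.card α)! =
      (Fintype.card α).choose #T * #{σ : Perm α | T.map σ.toEmbedding = S} := by
    rw [← Fintype.card_perm, ← Finset.card_univ, card_eq_sum_card_fiberwise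
      (t := powersetCard #T univ) (f := fun σ : Perm α => T.map σ.toEmbedding) (by simp),
      sum_congr rfl fun S' hS' => card_perm_map_eq_congr T ((mem_powersetCard.1 hS').2.trans h),
      sum_const, card_powersetCard, Finset.card_univ, smul_eq_mul]
  refine Nat.eq_of_mul_eq_mul_left (Nat.choose_pos hT) ?_
  rw [← total, ← mul_assoc, Nat.choose_mul_factorial_mul_factorial hT]

theorem sum_perm_prod_apply {R : Type*} [CommSemiring R] (v : α → R) (T : Finset α) :
    ∑ σ : Perm α, ∏ i ∈ T, v (σ i) =
      ((#T)! * (Fintype.card α - #T)! : ℕ) * (univ.val.map v).esymm #T := by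
  calc ∑ σ : Perm α, ∏ i ∈ T, v (σ i)
      = ∑ S ∈ powersetCard #T univ, ∑ σ : Perm α with T.map σ.toEmbedding = S,
          ∏ j ∈ T.map σ.toEmbedding, v j := by
        rw [sum_fiberwise_of_maps_to (by simp)]
        simp
    _ = ∑ S ∈ powersetCard #T univ,
          ((#T)! * (Fintype.card α - #T)! : ℕ) * ∏ j ∈ S, v j := by
        refine sum_congr rfl fun S hS => ?_
        rw [sum_congr rfl fun σ hσ => by rw [(mem_filter.1 hσ).2], sum_const,
          card_perm_map_eq T (mem_powersetCard.1 hS).2.symm, nsmul_eq_mul]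
    _ = _ := by rw [← mul_sum, esymm_map_val]

theorem Matrix.permanent_of_one_add_mul {R : Type*} [CommSemiring R] (u v : α → R) :
    (of fun i j => 1 + u i * v j).permanent =
      ∑ t ∈ range (Fintype.card α + 1), ((t ! * (Fintype.card α - t)! : ℕ) : R) *
        ((univ.val.map u).esymm t * (univ.val.map v).esymm t) := by
  calc (of fun i j => 1 + u i * v j).permanent
      = ∑ T ∈ (univ : Finset α).powerset,
          (∏ i ∈ T, v i) * ∑ σ : Perm α, ∏ i ∈ T, u (σ i) := by
        simp only [permanent, of_apply, prod_one_add, mul_sum, prod_mul_distrib]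
        rw [sum_comm]
        simp_rw [mul_comm]
    _ = ∑ t ∈ range (Fintype.card α + 1), ∑ T ∈ powersetCard t univ,
          ((t ! * (Fintype.card α - t)! : ℕ) : R) * (univ.val.map u).esymm t *
            ∏ i ∈ T, v i := by
        rw [sum_powerset, Finset.card_univ]
        refine sum_congr rfl fun t _ => sum_congr rfl fun T hT => ?_
        rw [sum_perm_prod_apply, (mem_powersetCard.1 hT).2]
        ring
    _ = _ := by simp_rw [← mul_sum, esymm_map_val, mul_assoc]

end Permutations

theorem Matrix.det_mul_eq_sum_prod_mul_det_submatrix {ι κ R : Type*} [Fintype ι] [DecidableEq ι]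
    [Fintype κ] [CommRing R] (X : Matrix ι κ R) (Y : Matrix κ ι R) :
    (X * Y).det = ∑ p : ι → κ, (∏ i, X i (p i)) * (Y.submatrix p id).det := by
  have rows : X * Y = fun i => ∑ k, X i k • Y k := by
    ext i j
    simp [mul_apply, Finset.sum_apply]
  rw [rows]
  change detRowAlternating _ = _
  rw [← AlternatingMap.coe_multilinearMap, MultilinearMap.map_sum]
  refine sum_congr rfl fun p _ => ?_
  rw [MultilinearMap.map_smul_univ]
  rfl

theorem Fin.sum_eq_sum_succAbove_comp_perm {M : Type*} [AddCommMonoid M] {n : ℕ}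
    (f : (Fin n → Fin (n + 1)) → M) (hf : ∀ p, ¬Injective p → f p = 0) :
    ∑ p, f p = ∑ m : Fin (n + 1), ∑ σ : Perm (Fin n), f (m.succAbove ∘ σ) := by
  let g : Fin (n + 1) × Perm (Fin n) → Fin n → Fin (n + 1) := fun q => q.1.succAbove ∘ q.2
  have g_inj : Injective g := by
    rintro ⟨m, σ⟩ ⟨m', σ'⟩ h
    have hm : m = m' := by
      simpa [g, Set.range_comp, Fin.range_succAbove, compl_inj_iff] using congrArg Set.range h
    subst hm
    have hσ : σ = σ' := Equiv.ext fun i => Fin.succAbove_right_injective (congrFun h i)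
    rw [hσ]
  have mem_range_g : ∀ p, Injective p → p ∈ univ.image g := by
    intro p hp
    obtain ⟨m, hm⟩ : ∃ m, m ∉ Set.range p := by
      by_contra! h
      simpa using Fintype.card_le_of_surjective p fun m => h m
    obtain ⟨z, rfl⟩ : ∃ z, p = m.succAbove ∘ z := by
      rw [← Set.range_subset_range_iff_exists_comp, Fin.range_succAbove]
      rintro _ ⟨i, rfl⟩ rfl
      exact hm ⟨i, rfl⟩
    have hz : Bijective z := Finite.injective_iff_bijective.1 hp.of_comp
    exact mem_image.2 ⟨(m, Equiv.ofBijective z hz), mem_univ _, rfl⟩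
  rw [← sum_subset (subset_univ (univ.image g)) fun p _ hp => hf p (mt (mem_range_g p) hp),
    sum_image fun q _ q' _ h => g_inj h, Fintype.sum_prod_type]

theorem Matrix.det_mul_fin_succ {R : Type*} [CommRing R] {n : ℕ}
    (X : Matrix (Fin n) (Fin (n + 1)) R) (Y : Matrix (Fin (n + 1)) (Fin n) R) :
    (X * Y).det = ∑ m : Fin (n + 1),
      (X.submatrix id m.succAbove).det * (Y.submatrix m.succAbove id).det := by
  rw [det_mul_eq_sum_prod_mul_det_submatrix, Fin.sum_eq_sum_succAbove_comp_perm]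
  · refine sum_congr rfl fun m _ => ?_
    have permute : ∀ σ : Perm (Fin n), (Y.submatrix (m.succAbove ∘ σ) id).det =
        Perm.sign σ * (Y.submatrix m.succAbove id).det := fun σ =>
      det_permute σ (Y.submatrix m.succAbove id)
    rw [sum_congr rfl fun σ _ => by rw [permute], ← det_transpose (X.submatrix id m.succAbove),
      det_apply' (X.submatrix id m.succAbove)ᵀ, sum_mul]
    refine sum_congr rfl fun σ _ => ?_
    simp only [Function.comp_apply, transpose_apply, submatrix_apply, id]
    ring
  · intro p hp
    obtain ⟨i, j, hij, hne⟩ := not_injective_iff.1 hp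
    rw [det_zero_of_row_eq hne (by ext k; simp [hij]), mul_zero]

section GeneralizedVandermonde

open Polynomial

variable {R : Type*} [CommRing R] {n : ℕ}

theorem Matrix.det_vandermonde_cons_X (x : Fin n → R) :
    (vandermonde (Fin.cons X (C ∘ x) : Fin (n + 1) → R[X])).det =
      C (vandermonde x).det * ∏ i, (C (x i) - X) := by
  rw [det_vandermonde, det_vandermonde, Fin.prod_univ_succ, Fin.Ioi_zero_eq_map, prod_map,
    mul_comm]
  simp [Fin.prod_Ioi_succ]

theorem Matrix.det_of_pow_succAbove (x : Fin n → R) (m : Fin (n + 1)) :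
    (of fun i k : Fin n => x i ^ (m.succAbove k : ℕ)).det =
      (vandermonde x).det * (univ.val.map x).esymm (n - m) := by
  set M : Fin (n + 1) → Matrix (Fin n) (Fin n) R :=
    fun j => of fun i k : Fin n => x i ^ (j.succAbove k : ℕ)
  set V := vandermonde (Fin.cons X (C ∘ x) : Fin (n + 1) → R[X])
  have laplace : V.det = ∑ j : Fin (n + 1), C ((-1) ^ (j : ℕ) * (M j).det) * X ^ (j : ℕ) := by
    rw [det_succ_row_zero]
    refine sum_congr rfl fun j _ => ?_
    have minor : V.submatrix Fin.succ j.succAbove = C.mapMatrix (M j) := Matrix.ext fun i k => by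
      simp only [V, M, submatrix_apply, vandermonde_apply, Fin.cons_succ, Function.comp_apply,
        RingHom.mapMatrix_apply, map_apply, of_apply, map_pow]
    rw [minor, ← RingHom.map_det, map_mul, map_pow, map_neg, map_one]
    simp [V]
  have prod_coeff : (∏ i, (C (x i) - X)).coeff m =
      (-1) ^ n * ((-1) ^ (n - m) * (univ.val.map x).esymm (n - m)) := by
    have flip : ∏ i, (C (x i) - X) = C ((-1) ^ n) * ((univ.val.map x).map (X - C ·)).prod := by
      simp_rw [← neg_sub X, prod_neg]
      simp [Finset.prod_eq_multiset_prod, Function.comp_def]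
    rw [flip, coeff_C_mul, Multiset.prod_X_sub_C_coeff _ (by simpa using Fin.is_le m)]
    simp
  have hcoeff := congrArg (coeff · m) (laplace.symm.trans (det_vandermonde_cons_X x))
  simp only [finsetSum_coeff, coeff_C_mul, coeff_X_pow, Fin.val_inj, mul_ite, mul_one, mul_zero,
    sum_ite_eq, mem_univ, if_true, prod_coeff] at hcoeff
  have sign : (-1 : R) ^ n * (-1) ^ (n - m) = (-1) ^ (m : ℕ) := by
    rw [← pow_add, show n + (n - m) = m + 2 * (n - m) by omega, pow_add, pow_mul]
    simp
  rw [← mul_assoc ((-1 : R) ^ n), sign, mul_left_comm] at hcoeff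
  exact (isUnit_neg_one.pow m).mul_left_cancel hcoeff

end GeneralizedVandermonde

theorem Matrix.det_of_one_add_mul_pow {R : Type*} [CommRing R] {n : ℕ} (u v : Fin n → R) :
    (of fun i j => (1 + u i * v j) ^ n).det = ∑ m : Fin (n + 1),
      (∏ k, (n.choose (m.succAbove k) : R)) *
        ((vandermonde u).det * (univ.val.map u).esymm (n - m)) *
          ((vandermonde v).det * (univ.val.map v).esymm (n - m)) := by
  have binomial : of (fun i j => (1 + u i * v j) ^ n) =
      (of fun i (k : Fin (n + 1)) => (n.choose k : R) * u i ^ (k : ℕ)) *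
        of fun (k : Fin (n + 1)) j => v j ^ (k : ℕ) := by
    ext i j
    rw [mul_apply, of_apply, add_comm, add_pow, ← Fin.sum_univ_eq_sum_range]
    refine sum_congr rfl fun k _ => ?_
    simp only [of_apply, one_pow, mul_one, mul_pow]
    ring
  rw [binomial, det_mul_fin_succ]
  refine sum_congr rfl fun m _ => ?_
  rw [← det_of_pow_succAbove, ← det_of_pow_succAbove, ← det_mul_row]
  congr 1
  rw [← det_transpose]
  rfl

theorem Nat.factorial_mul_prod_choose_succAbove {n : ℕ} (m : Fin (n + 1)) :
    n ! * ∏ k, n.choose (m.succAbove k) =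
      m ! * (n - m)! * ∏ k ∈ range (n + 1), n.choose k := by
  rw [← Fin.prod_univ_eq_prod_range, Fin.prod_univ_succAbove _ m,
    ← Nat.choose_mul_factorial_mul_factorial (Fin.is_le m)]
  ring

theorem stmt_8_general (n : ℕ) (u v : Fin n → ℝ)
    (A C : Matrix (Fin n) (Fin n) ℝ)
    (hA : ∀ i j, A i j = 1 + u i * v j)
    (hC : ∀ i j, C i j = (1 + u i * v j) ^ n) :
    (n.factorial : ℝ) * C.det =
      vmd u * vmd v * (∏ j ∈ Finset.range (n + 1), (n.choose j : ℝ)) *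
        A.permanent := by
  obtain rfl : A = of fun i j => 1 + u i * v j := Matrix.ext hA
  obtain rfl : C = of fun i j => (1 + u i * v j) ^ n := Matrix.ext hC
  rw [det_of_one_add_mul_pow, permanent_of_one_add_mul, Fintype.card_fin, vmd, vmd,
    ← det_vandermonde, ← det_vandermonde, mul_sum, mul_sum, ← sum_range_reflect,
    ← Fin.sum_univ_eq_sum_range]
  refine sum_congr rfl fun m _ => ?_
  have choose_prod := congrArg (Nat.cast (R := ℝ)) (Nat.factorial_mul_prod_choose_succAbove m)
  rw [add_tsub_cancel_right, Nat.sub_sub_self (Fin.is_le m)]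
  push_cast at choose_prod ⊢
  linear_combination ((vandermonde u).det * (univ.val.map u).esymm (n - m)) *
    ((vandermonde v).det * (univ.val.map v).esymm (n - m)) * choose_prod

theorem stmt_8 (n : ℕ) (hn : 0 < n) (u v : Fin n → ℝ)
    (A C : Matrix (Fin n) (Fin n) ℝ)
    (hA : ∀ i j, A i j = 1 + u i * v j)
    (hC : ∀ i j, C i j = (1 + u i * v j) ^ n) :
    (n.factorial : ℝ) * C.det =
      vmd u * vmd v * (∏ j ∈ Finset.range (n + 1), (n.choose j : ℝ)) *
        A.permanent :=
  stmt_8_general n u v A C hA hC
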